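/- arXiv:2501.12605 — 2 statements merged into one kernel-verified Lean document; each statement's English description precedes it below -/
import Mathlib

section
/- Let σ: ℕ → ℕ be a bijection and let T = T_σ be the associated permutation operator on H. Then P(T) is closed in H if and only if sup{card([m]) : m ∈ ℕ, [m] is finite} < ∞. -/
/-- The orbit `[n] = {σ^k n : k ∈ ℤ}` of `n` under the bijection `σ : ℕ → ℕ`. -/
def permOrbit (σ : Equiv.Perm ℕ) (n : ℕ) : Set ℕ := {m : ℕ | ∃ z : ℤ, (σ ^ z) n = m}

/-!
Write `c i = ⟪e i, x⟫`. A vector with `T^m x = x` has `c ∘ σ^m = c`; along an infinite orbit of `σ`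
the coefficients are then constant and square-summable, hence zero. So if all periods of `σ` are
at most `B`, every periodic vector is fixed by `T^(B!)`, and the periodic vectors form the closed
set of fixed points of `T^(B!)`. Otherwise choose periodic points `u j` of strictly increasing
periods. The vector `x` with coefficients `2⁻ʲ` at `u j` and `0` elsewhere is a limit of finite
sums of periodic vectors. But `T^m x = x` would give `c (σ^m (u (m+1))) = c (u (m+1)) ≠ 0`, so
`σ^m (u (m+1))` is some `u j` of the same period, i.e. `u (m+1)` itself, whose period exceeds `m`.
-/

open Function Set
open scoped InnerProductSpace ENNReal

namespace LinearMap
variable {R M : Type*} [Semiring R] [AddCommMonoid M] [Module R M]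

def periodicPtsSubmodule (f : M →ₗ[R] M) : Submodule R M where
  carrier := periodicPts f
  zero_mem' := mk_mem_periodicPts one_pos (map_zero f)
  add_mem' := by
    rintro x y ⟨a, ha, hx⟩ ⟨b, hb, hy⟩
    refine mk_mem_periodicPts (Nat.mul_pos ha hb) ?_
    rw [IsPeriodicPt, IsFixedPt, ← Module.End.coe_pow, map_add, Module.End.coe_pow,
      (hx.mul_const b).eq, (hy.const_mul a).eq]
  smul_mem' := by
    rintro c x ⟨a, ha, hx⟩
    refine mk_mem_periodicPts ha ?_
    rw [IsPeriodicPt, IsFixedPt, ← Module.End.coe_pow, map_smul, Module.End.coe_pow, hx.eq]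

end LinearMap

theorem exists_strictMono_minimalPeriod_of_not_bddAbove {α : Type*} {f : α → α}
    (h : ¬BddAbove (minimalPeriod f '' periodicPts f)) :
    ∃ u : ℕ → α, (∀ j, u j ∈ periodicPts f) ∧ StrictMono (minimalPeriod f ∘ u) := by
  have hS := infinite_of_not_bddAbove h
  choose u hu hp using Nat.nth_mem_of_infinite hS
  refine ⟨u, hu, ?_⟩
  convert Nat.nth_strictMono hS using 1
  exact funext hp

theorem Function.Injective.injective_iterate_apply_of_notMem_periodicPts {α : Type*}
    {f : α → α} (hf : Injective f) {x : α} (hx : x ∉ periodicPts f) : Injective (f^[·] x) := by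
  intro a b hab
  by_contra hne
  rcases Ne.lt_or_gt hne with h | h
  · exact hx (mk_mem_periodicPts (by omega) (iterate_cancel hf hab.symm))
  · exact hx (mk_mem_periodicPts (by omega) (iterate_cancel hf hab))

theorem memℓp_extend_zero_iff {α β E : Type*} [NormedAddCommGroup E] {u : α → β}
    (hu : Injective u) {f : α → E} {p : ℝ≥0∞} (hp : 0 < p.toReal) :
    Memℓp (extend u f 0) p ↔ Memℓp f p := by
  have : (fun i => ‖extend u f 0 i‖ ^ p.toReal) = extend u (fun j => ‖f j‖ ^ p.toReal) 0 := by
    funext i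
    rw [apply_extend (‖·‖ ^ p.toReal)]
    congr 1
    funext
    simp [Real.zero_rpow hp.ne']
  rw [memℓp_gen_iff hp, memℓp_gen_iff hp, this, summable_extend_zero hu]

namespace HilbertBasis

variable {𝕜 ι E : Type*} [RCLike 𝕜] [NormedAddCommGroup E] [InnerProductSpace 𝕜 E]
  {e : HilbertBasis ι 𝕜 E} {σ : ι → ι} {T : E →L[𝕜] E}

theorem exists_inner_eq (e : HilbertBasis ι 𝕜 E) {c : ι → 𝕜} (hc : Memℓp c 2) :
    ∃ x, ∀ i, ⟪e i, x⟫_𝕜 = c i :=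
  ⟨e.repr.symm ⟨c, hc⟩, fun i => by
    rw [← e.repr_apply_apply, LinearIsometryEquiv.apply_symm_apply]⟩

theorem inner_apply_of_semiconj (hσ : Injective σ) (hT : Semiconj e σ T) (i : ι) (x : E) :
    ⟪e (σ i), T x⟫_𝕜 = ⟪e i, x⟫_𝕜 := by
  have : (innerSL 𝕜 (e (σ i))).comp T = innerSL 𝕜 (e i) := by
    refine ContinuousLinearMap.ext_on
      (Submodule.dense_iff_topologicalClosure_eq_top.mpr e.dense_span) ?_
    rintro _ ⟨j, rfl⟩
    classical
    simp [← hT j, orthonormal_iff_ite.mp e.orthonormal, hσ.eq_iff]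
  exact DFunLike.congr_fun this x

theorem inner_iterate_of_semiconj (hσ : Injective σ) (hT : Semiconj e σ T) (n : ℕ) (i : ι)
    (x : E) : ⟪e (σ^[n] i), T^[n] x⟫_𝕜 = ⟪e i, x⟫_𝕜 := by
  induction n generalizing i x with
  | zero => rfl
  | succ n ih => rw [iterate_succ_apply, iterate_succ_apply, ih, inner_apply_of_semiconj hσ hT]

theorem inner_eq_zero_of_notMem_periodicPts (hσ : Injective σ) (hT : Semiconj e σ T) {x : E}
    (hx : x ∈ periodicPts T) {i : ι} (hi : i ∉ periodicPts σ) : ⟪e i, x⟫_𝕜 = 0 := by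
  obtain ⟨m, hm, hxm⟩ := hx
  have hconst : ∀ k, ⟪e (σ^[m * k] i), x⟫_𝕜 = ⟪e i, x⟫_𝕜 := by
    intro k
    induction k with
    | zero => rfl
    | succ k ih =>
      have := inner_iterate_of_semiconj hσ hT m (σ^[m * k] i) x
      rw [hxm.eq, ← iterate_add_apply] at this
      rwa [Nat.mul_succ, add_comm, this]
  have hinj : Injective fun k => σ^[m * k] i :=
    (hσ.injective_iterate_apply_of_notMem_periodicPts hi).comp (mul_right_injective₀ hm.ne')
  have hlim := (e.orthonormal.inner_products_summable (x := x)).tendsto_cofinite_zero.comp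
    hinj.tendsto_cofinite
  simp only [comp_def, hconst] at hlim
  simpa using tendsto_const_nhds_iff.mp hlim

theorem isPeriodicPt_of_inner_ne_zero (hT : Semiconj e σ T) {n : ℕ} {x : E}
    (h : ∀ i, ⟪e i, x⟫_𝕜 ≠ 0 → IsPeriodicPt σ n i) : IsPeriodicPt T n x := by
  have hterm : ∀ i, (T ^ n) (e.repr x i • e i) = e.repr x i • e i := by
    intro i
    rw [map_smul, FunLike.coe_pow_eq_iterate, ← hT.iterate_right n i]
    by_cases hi : e.repr x i = 0
    · simp [hi]
    · rw [(h i (by rwa [← e.repr_apply_apply])).eq]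
  have hsum := (e.hasSum_repr x).mapL (T ^ n)
  simp only [hterm] at hsum
  rw [IsPeriodicPt, IsFixedPt, ← FunLike.coe_pow_eq_iterate]
  exact hsum.unique (e.hasSum_repr x)

theorem mem_closure_periodicPts_of_inner_ne_zero (hT : Semiconj e σ T) {x : E}
    (h : ∀ i, ⟪e i, x⟫_𝕜 ≠ 0 → i ∈ periodicPts σ) : x ∈ closure (periodicPts T) := by
  refine mem_closure_of_tendsto (e.hasSum_repr x) (Filter.Eventually.of_forall fun s => ?_)
  refine (T : E →ₗ[𝕜] E).periodicPtsSubmodule.sum_mem fun i _ => ?_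
  by_cases hi : e.repr x i = 0
  · simp [hi]
  · obtain ⟨n, hn, hper⟩ := h i (by rwa [← e.repr_apply_apply])
    exact Submodule.smul_mem _ _ (mk_mem_periodicPts hn (hper.map hT))

theorem isClosed_periodicPts_of_bddAbove (hσ : Injective σ) (hT : Semiconj e σ T)
    (hB : BddAbove (minimalPeriod σ '' periodicPts σ)) : IsClosed (periodicPts T) := by
  obtain ⟨B, hB⟩ := hB
  have hperiod : ∀ i ∈ periodicPts σ, IsPeriodicPt σ B.factorial i := fun i hi =>
    (isPeriodicPt_minimalPeriod σ i).trans_dvd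
      (Nat.dvd_factorial (minimalPeriod_pos_of_mem_periodicPts hi) (hB (mem_image_of_mem _ hi)))
  have : periodicPts T = fixedPoints T^[B.factorial] := by
    refine Subset.antisymm (fun x hx => isPeriodicPt_of_inner_ne_zero hT fun i hi => ?_)
      fun x hx => mk_mem_periodicPts B.factorial_pos hx
    exact hperiod i (not_imp_comm.mp (inner_eq_zero_of_notMem_periodicPts hσ hT hx) hi)
  rw [this]
  exact isClosed_fixedPoints (T.continuous.iterate _)

theorem not_isClosed_periodicPts_of_strictMono (hσ : Injective σ) (hT : Semiconj e σ T)
    {u : ℕ → ι} (hu : ∀ j, u j ∈ periodicPts σ) (hp : StrictMono (minimalPeriod σ ∘ u)) :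
    ¬IsClosed (periodicPts T) := by
  have hu_inj : Injective u := hp.injective.of_comp
  set c : ι → 𝕜 := extend u (fun j => 2⁻¹ ^ j) 0
  have hc : Memℓp c 2 := (memℓp_extend_zero_iff hu_inj (by norm_num)).mpr <|
    (memℓp_gen (p := 1) (by simpa using summable_geometric_two)).of_exponent_ge one_le_two
  obtain ⟨x, hx⟩ := e.exists_inner_eq hc
  have hc_range : ∀ i, c i ≠ 0 → i ∈ range u := fun i hi => by
    by_contra h
    exact hi (extend_apply' _ _ _ h)
  intro hclosed
  obtain ⟨m, hm, hxm⟩ : x ∈ periodicPts T := hclosed.closure_subset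
    (mem_closure_periodicPts_of_inner_ne_zero hT fun i hi => by
      obtain ⟨j, rfl⟩ := hc_range i (hx i ▸ hi)
      exact hu j)
  -- `StrictMono` only gives `k ≤ minimalPeriod σ (u k)`, hence the shift by one.
  set k := m + 1
  have hck : c (σ^[m] (u k)) ≠ 0 := by
    rw [← hx, ← hxm.eq, inner_iterate_of_semiconj hσ hT, hx]
    simp [c, hu_inj.extend_apply]
  obtain ⟨j, hj⟩ := hc_range _ hck
  have hjk : j = k := hp.injective <| by
    simp only [comp_apply, hj, minimalPeriod_apply_iterate (hu k)]
  have hper : IsPeriodicPt σ m (u k) := by rw [IsPeriodicPt, IsFixedPt, ← hj, hjk]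
  have := Nat.le_of_dvd hm hper.minimalPeriod_dvd
  have := hp.id_le k
  simp only [comp_apply, id] at this
  omega

theorem isClosed_periodicPts_iff_bddAbove (hσ : Injective σ) (hT : Semiconj e σ T) :
    IsClosed (periodicPts T) ↔ BddAbove (minimalPeriod σ '' periodicPts σ) := by
  refine ⟨fun hclosed => ?_, isClosed_periodicPts_of_bddAbove hσ hT⟩
  by_contra hB
  obtain ⟨u, hu, hp⟩ := exists_strictMono_minimalPeriod_of_not_bddAbove hB
  exact not_isClosed_periodicPts_of_strictMono hσ hT hu hp hclosed

end HilbertBasis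

theorem permOrbit_eq_orbit_zpowers (σ : Equiv.Perm ℕ) (n : ℕ) :
    permOrbit σ n = MulAction.orbit (Subgroup.zpowers σ) n := by
  ext m
  exact ⟨fun ⟨z, hz⟩ => ⟨⟨σ ^ z, z, rfl⟩, hz⟩, fun ⟨⟨_, z, rfl⟩, hz⟩ => ⟨z, hz⟩⟩

-- Infinite orbits included: there both sides are `0`.
theorem ncard_permOrbit (σ : Equiv.Perm ℕ) (n : ℕ) :
    (permOrbit σ n).ncard = minimalPeriod σ n := by
  rw [permOrbit_eq_orbit_zpowers, ← Nat.card_coe_set_eq,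
    Nat.card_congr (MulAction.orbitZPowersEquiv σ n), Nat.card_zmod]
  rfl

theorem permOrbit_finite_iff (σ : Equiv.Perm ℕ) (n : ℕ) :
    (permOrbit σ n).Finite ↔ n ∈ periodicPts σ := by
  rw [← minimalPeriod_pos_iff_mem_periodicPts, ← ncard_permOrbit]
  exact ⟨fun h => (ncard_pos h).2 ⟨n, 0, by simp⟩, finite_of_ncard_pos⟩

theorem permutation_periodic_points_closed_iff_general
    {H : Type*} [NormedAddCommGroup H] [InnerProductSpace ℂ H]
    (e : HilbertBasis ℕ ℂ H) (σ : Equiv.Perm ℕ) (T : H →L[ℂ] H)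
    (hT : ∀ n, T (e n) = e (σ n)) :
    IsClosed {x : H | ∃ m : ℕ, 0 < m ∧ (T ^ m) x = x}
      ↔ ∃ B : ℕ, ∀ m : ℕ, (permOrbit σ m).Finite → (permOrbit σ m).ncard ≤ B := by
  have hset : {x : H | ∃ m : ℕ, 0 < m ∧ (T ^ m) x = x} = periodicPts T := by
    ext x
    simp [mem_periodicPts, IsPeriodicPt, IsFixedPt]
  rw [hset, HilbertBasis.isClosed_periodicPts_iff_bddAbove σ.injective fun n => (hT n).symm]
  simp only [bddAbove_def, forall_mem_image, permOrbit_finite_iff, ncard_permOrbit]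

/-- For a permutation operator `T e_n = e_{σ n}`, the set of periodic points of `T` is
closed in `H` iff the cardinalities of the finite orbits of `σ` are uniformly bounded. -/
theorem permutation_periodic_points_closed_iff
    {H : Type*} [NormedAddCommGroup H] [InnerProductSpace ℂ H] [CompleteSpace H]
    (e : HilbertBasis ℕ ℂ H) (σ : Equiv.Perm ℕ) (T : H →L[ℂ] H)
    (hT : ∀ n, T (e n) = e (σ n)) :
    IsClosed {x : H | ∃ m : ℕ, 0 < m ∧ (T ^ m) x = x}
      ↔ ∃ B : ℕ, ∀ m : ℕ, (permOrbit σ m).Finite → (permOrbit σ m).ncard ≤ B :=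
  permutation_periodic_points_closed_iff_general e σ T hT
end

section
/- Let T be a unitary diagonal operator on H, with T e_n = α_n e_n for all n where |α_n| = 1. Then there exists a sequence {T_n}_{n∈ℕ} of diagonal operators on H such that P(T_n) = H for all n (indeed T_n^{2^n} = I) and ‖T_n − T‖ → 0 as n → ∞. In particular, the set of diagonal operators S with P(S) = H is dense in the set of all unitary diagonal operators with respect to the operator norm. -/
/-!
Round the argument of each `α j` to the nearest multiple of `2π / 2 ^ n`. The resulting
`2 ^ n`-th roots of unity `β n j` lie within `π / 2 ^ n` of `α j`, uniformly in `j`, so the diagonal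
operator `Tn n` with entries `β n j` satisfies `Tn n ^ 2 ^ n = 1`, and `Tn n - T`, being diagonal with
entries `β n j - α j`, has norm at most `π / 2 ^ n`.
-/

open Complex Real
open scoped ENNReal NNReal

namespace Memℓp

variable {ι 𝕜 : Type*} [NormedField 𝕜] {p : ℝ≥0∞}

theorem mul_left_of_norm_le {β : ι → 𝕜} {C : ℝ} (hβ : ∀ i, ‖β i‖ ≤ C) {f : ι → 𝕜}
    (hf : Memℓp f p) : Memℓp (fun i => β i * f i) p :=
  (hf.norm.const_mul C).mono fun i => by
    rw [norm_mul]
    exact mul_le_mul_of_nonneg_right (hβ i) (norm_nonneg _)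

end Memℓp

namespace lp

variable {ι 𝕜 : Type*} [RCLike 𝕜] {p : ℝ≥0∞} [Fact (1 ≤ p)]

noncomputable def diagonal (β : ι → 𝕜) {C : ℝ≥0} (hβ : ∀ i, ‖β i‖ ≤ C) :
    lp (fun _ : ι => 𝕜) p →L[𝕜] lp (fun _ : ι => 𝕜) p :=
  LinearMap.mkContinuous
    { toFun f := ⟨fun i => β i * f i, (lp.memℓp f).mul_left_of_norm_le hβ⟩
      map_add' f g := lp.ext <| funext fun i => mul_add _ _ _
      map_smul' c f := lp.ext <| funext fun i => mul_left_comm _ _ _ }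
    C fun f => calc
      _ ≤ ‖((C : ℝ) : 𝕜) • f‖ := lp.norm_mono (zero_lt_one.trans_le Fact.out).ne' fun i => by
        change ‖β i * f i‖ ≤ ‖((C : ℝ) : 𝕜) • f i‖
        rw [norm_mul, norm_smul, RCLike.norm_ofReal, NNReal.abs_eq]
        exact mul_le_mul_of_nonneg_right (hβ i) (norm_nonneg (f i))
      _ = C * ‖f‖ := by
        rw [lp.norm_const_smul (zero_lt_one.trans_le Fact.out).ne', RCLike.norm_ofReal,
          NNReal.abs_eq]

theorem diagonal_apply (β : ι → 𝕜) {C : ℝ≥0} (hβ : ∀ i, ‖β i‖ ≤ C)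
    (f : lp (fun _ : ι => 𝕜) p) (i : ι) : diagonal β hβ f i = β i * f i := rfl

theorem diagonal_single [DecidableEq ι] (β : ι → 𝕜) {C : ℝ≥0} (hβ : ∀ i, ‖β i‖ ≤ C) (j : ι)
    (c : 𝕜) :
    diagonal (p := p) β hβ (lp.single p j c) = β j • lp.single p j c := by
  ext i
  rcases eq_or_ne i j with rfl | hij
  · simp [diagonal_apply]
  · simp [diagonal_apply, hij]

theorem norm_diagonal_le (β : ι → 𝕜) {C : ℝ≥0} (hβ : ∀ i, ‖β i‖ ≤ C) :
    ‖diagonal (p := p) β hβ‖ ≤ C :=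
  LinearMap.mkContinuous_norm_le _ C.2 _

end lp

namespace HilbertBasis

variable {ι 𝕜 E : Type*} [RCLike 𝕜] [NormedAddCommGroup E] [InnerProductSpace 𝕜 E]

theorem ext_continuousLinearMap {F : Type*} [NormedAddCommGroup F] [NormedSpace 𝕜 F]
    (b : HilbertBasis ι 𝕜 E) {f g : E →L[𝕜] F} (h : ∀ i, f (b i) = g (b i)) : f = g :=
  ContinuousLinearMap.ext_on (Submodule.dense_iff_topologicalClosure_eq_top.2 b.dense_span) <| by
    rintro _ ⟨i, rfl⟩
    exact h i

noncomputable def diagonal (b : HilbertBasis ι 𝕜 E) (β : ι → 𝕜) {C : ℝ≥0}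
    (hβ : ∀ i, ‖β i‖ ≤ C) : E →L[𝕜] E :=
  (b.repr.symm.toContinuousLinearEquiv : lp (fun _ : ι => 𝕜) 2 →L[𝕜] E) ∘L lp.diagonal β hβ ∘L
    (b.repr.toContinuousLinearEquiv : E →L[𝕜] lp (fun _ : ι => 𝕜) 2)

variable (b : HilbertBasis ι 𝕜 E) (β : ι → 𝕜) {C : ℝ≥0} (hβ : ∀ i, ‖β i‖ ≤ C)

theorem diagonal_apply_self (i : ι) : b.diagonal β hβ (b i) = β i • b i := by
  classical
  simp [diagonal, b.repr_self, lp.diagonal_single]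

theorem diagonal_pow_apply_self (m : ℕ) (i : ι) :
    (b.diagonal β hβ ^ m) (b i) = β i ^ m • b i := by
  induction m with
  | zero => simp
  | succ m ih => rw [pow_succ', mul_apply_eq_comp, ih, map_smul,
      diagonal_apply_self, smul_smul, ← pow_succ]

theorem norm_diagonal_le : ‖b.diagonal β hβ‖ ≤ C :=
  ContinuousLinearMap.opNorm_le_bound _ C.2 fun x => by
    simpa [diagonal] using (lp.diagonal β hβ).le_of_opNorm_le (lp.norm_diagonal_le β hβ) (b.repr x)

theorem norm_le_of_apply_self_eq_smul {S : E →L[𝕜] E} {γ : ι → 𝕜}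
    (hS : ∀ i, S (b i) = γ i • b i) (hγ : ∀ i, ‖γ i‖ ≤ C) : ‖S‖ ≤ C := by
  rw [show S = b.diagonal γ hγ from b.ext_continuousLinearMap fun i => by
    rw [hS, diagonal_apply_self]]
  exact b.norm_diagonal_le γ hγ

end HilbertBasis

theorem Complex.norm_exp_ofReal_mul_I_sub_exp_ofReal_mul_I_le (a b : ℝ) :
    ‖exp (a * I) - exp (b * I)‖ ≤ |a - b| := by
  have hfactor : exp (a * I) - exp (b * I) = exp (b * I) * (exp (I * ↑(a - b)) - 1) := by
    rw [mul_sub, mul_one, ← Complex.exp_add]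
    push_cast
    ring_nf
  rw [hfactor, norm_mul, norm_exp_ofReal_mul_I, one_mul, ← Real.norm_eq_abs]
  exact Real.norm_exp_I_mul_ofReal_sub_one_le

noncomputable def nearestRootOfUnity (N : ℕ) (z : ℂ) : ℂ :=
  exp (↑(2 * π * round (arg z * N / (2 * π)) / N) * I)

theorem norm_nearestRootOfUnity (N : ℕ) (z : ℂ) : ‖nearestRootOfUnity N z‖ = 1 :=
  norm_exp_ofReal_mul_I _

theorem nearestRootOfUnity_pow (N : ℕ) (z : ℂ) : nearestRootOfUnity N z ^ N = 1 := by
  rcases eq_or_ne N 0 with rfl | hN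
  · exact pow_zero _
  rw [nearestRootOfUnity, ← Complex.exp_nat_mul,
    ← exp_int_mul_two_pi_mul_I (round (arg z * N / (2 * π)))]
  congr 1
  push_cast
  field_simp

theorem norm_nearestRootOfUnity_sub_le {N : ℕ} (hN : 0 < N) {z : ℂ} (hz : ‖z‖ = 1) :
    ‖nearestRootOfUnity N z - z‖ ≤ π / N := by
  set θ := arg z
  set k := round (θ * N / (2 * π))
  have hθ : exp (↑θ * I) = z := by
    simpa [hz] using norm_mul_exp_arg_mul_I z
  have hk : 2 * π * k / N - θ = 2 * π / N * (k - θ * N / (2 * π)) := by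
    field_simp
  calc ‖nearestRootOfUnity N z - z‖ = ‖exp (↑(2 * π * k / N) * I) - exp (↑θ * I)‖ := by
        rw [hθ]; rfl
    _ ≤ |2 * π * k / N - θ| := norm_exp_ofReal_mul_I_sub_exp_ofReal_mul_I_le _ _
    _ = 2 * π / N * |θ * N / (2 * π) - k| := by
        rw [hk, abs_mul, abs_of_pos (by positivity), abs_sub_comm]
    _ ≤ 2 * π / N * (1 / 2) := by gcongr; exact abs_sub_round _
    _ = π / N := by ring

/-- Every unitary diagonal operator `T e_n = α_n • e_n` (with `|α_n| = 1`) is the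
operator-norm limit of a sequence of diagonal operators `T_n` with every point of `H`
periodic for each `T_n`; indeed one may take `T_n ^ (2 ^ n) = 1`. Hence the diagonal
operators with all points periodic are dense among the unitary diagonal operators. -/
theorem unitary_diagonal_approx_by_diagonal_with_all_points_periodic
    {H : Type*} [NormedAddCommGroup H] [InnerProductSpace ℂ H] [CompleteSpace H]
    (e : HilbertBasis ℕ ℂ H) (α : ℕ → ℂ) (T : H →L[ℂ] H)
    (hT : ∀ n, T (e n) = α n • e n) (hα : ∀ n, ‖α n‖ = 1) :
    ∃ Tn : ℕ → (H →L[ℂ] H),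
      (∀ n, ∃ β : ℕ → ℂ, ∀ j, Tn n (e j) = β j • e j) ∧
      (∀ n, {x : H | ∃ m : ℕ, 0 < m ∧ ((Tn n) ^ m) x = x} = Set.univ) ∧
      (∀ n, (Tn n) ^ (2 ^ n) = 1) ∧
      Filter.Tendsto (fun n => ‖Tn n - T‖) Filter.atTop (nhds 0) := by
  let β n j := nearestRootOfUnity (2 ^ n) (α j)
  have hβ n j : ‖β n j‖ ≤ (1 : ℝ≥0) := by rw [NNReal.coe_one, norm_nearestRootOfUnity]
  let Tn n := e.diagonal (β n) (hβ n)
  have hpow n : Tn n ^ 2 ^ n = 1 := e.ext_continuousLinearMap fun j => by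
    rw [e.diagonal_pow_apply_self, nearestRootOfUnity_pow, one_smul, one_apply_eq_self]
  have hdist n : ‖Tn n - T‖ ≤ π / 2 ^ n := by
    refine e.norm_le_of_apply_self_eq_smul (γ := β n - α) (C := NNReal.pi / 2 ^ n)
      (fun j => ?_) fun j => ?_
    · rw [sub_apply, e.diagonal_apply_self, hT, Pi.sub_apply, sub_smul]
    · simpa using norm_nearestRootOfUnity_sub_le (Nat.two_pow_pos n) (hα j)
  refine ⟨Tn, fun n => ⟨β n, e.diagonal_apply_self _ _⟩, fun n => ?_, hpow, ?_⟩
  · exact Set.eq_univ_of_forall fun x => ⟨2 ^ n, by positivity, by rw [hpow n, one_apply_eq_self]⟩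
  · exact squeeze_zero (fun n => norm_nonneg _) hdist
      ((tendsto_pow_atTop_atTop_of_one_lt one_lt_two).const_div_atTop π)
end
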